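/- Let 0 < p < 1, q = 1 − p, and f(t) = q e^{−itp} + p e^{itq}. Then for all real t with |t| ≤ π/2, |f(t)| ≤ exp(−4t²pq/π²). -/

import Mathlib

/-!
Expanding the modulus gives `‖f t‖² = 1 - 2pq (1 - cos t)`. Since `(1 - cos t) / t²` decreases
on `(0, π]` (the chord bound for the concave `sin` on `[0, π]`, applied at `t / 2`), on
`|t| ≤ π/2` we get `1 - cos t ≥ 4t²/π²`, and `1 - x ≤ exp (-x)` finishes.
-/

open Real

namespace Real

lemma sin_div_mul_le_sin {x a : ℝ} (hx : 0 ≤ x) (hxa : x ≤ a) (ha : a ≤ π) :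
    sin a / a * x ≤ sin x := by
  rcases (hx.trans hxa).eq_or_lt with rfl | ha0
  · simp [le_antisymm hxa hx]
  have key := strictConcaveOn_sin_Icc.concaveOn.2 ⟨le_rfl, pi_pos.le⟩ ⟨ha0.le, ha⟩
    (sub_nonneg.2 ((div_le_one ha0).2 hxa)) (div_nonneg hx ha0.le) (sub_add_cancel 1 (x / a))
  simpa [div_mul_cancel₀ x ha0.ne', div_mul_eq_mul_div, mul_div_assoc, mul_comm] using key

lemma cos_le_one_sub_mul_sq_of_abs_le {t a : ℝ} (ht : |t| ≤ a) (ha : a ≤ π) :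
    cos t ≤ 1 - (1 - cos a) / a ^ 2 * t ^ 2 := by
  wlog ht0 : 0 ≤ t generalizing t
  · simpa using this (t := -t) (by rwa [abs_neg]) (by linarith)
  rw [abs_of_nonneg ht0] at ht
  have hsin : sin (a / 2) / (a / 2) * (t / 2) ≤ sin (t / 2) :=
    sin_div_mul_le_sin (by positivity) (by linarith) (by linarith)
  have hsq : sin (a / 2) ^ 2 / a ^ 2 * t ^ 2 ≤ sin (t / 2) ^ 2 :=
    calc _ = (sin (a / 2) / (a / 2) * (t / 2)) ^ 2 := by ring
      _ ≤ _ := pow_le_pow_left₀ (mul_nonneg (div_nonneg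
          (sin_nonneg_of_nonneg_of_le_pi (by linarith) (by linarith)) (by linarith))
          (by positivity)) hsin 2
  have hcos_t := cos_two_mul_eq_one_sub (t / 2)
  have hcos_a := cos_two_mul_eq_one_sub (a / 2)
  rw [mul_div_cancel₀ _ two_ne_zero] at hcos_t hcos_a
  rw [hcos_t, hcos_a, sub_sub_cancel, mul_div_assoc, mul_assoc]
  linarith

end Real

lemma norm_sq_ofReal_mul_exp_add (a b x y : ℝ) :
    ‖(a : ℂ) * Complex.exp (x * Complex.I) + b * Complex.exp (y * Complex.I)‖ ^ 2 =
      a ^ 2 + b ^ 2 + 2 * a * b * cos (x - y) := by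
  have hsplit : (a : ℂ) * Complex.exp (x * Complex.I) + b * Complex.exp (y * Complex.I) =
      ((a * cos x + b * cos y : ℝ) : ℂ) + ((a * sin x + b * sin y : ℝ) : ℂ) * Complex.I := by
    simp only [Complex.exp_mul_I, ← Complex.ofReal_cos, ← Complex.ofReal_sin]
    push_cast
    ring
  rw [Complex.sq_norm, hsplit, Complex.normSq_add_mul_I, cos_sub]
  linear_combination a ^ 2 * sin_sq_add_cos_sq x + b ^ 2 * sin_sq_add_cos_sq y

lemma norm_sq_bernoulli_charfun (p t : ℝ) :
    ‖(1 - p : ℂ) * Complex.exp (-Complex.I * t * p) +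
        (p : ℂ) * Complex.exp (Complex.I * t * (1 - p))‖ ^ 2 =
      1 - 2 * p * (1 - p) * (1 - cos t) := by
  rw [show -Complex.I * t * p = ((-(t * p) : ℝ) : ℂ) * Complex.I by push_cast; ring,
    show Complex.I * t * (1 - p) = ((t * (1 - p) : ℝ) : ℂ) * Complex.I by push_cast; ring,
    show (1 - p : ℂ) = ((1 - p : ℝ) : ℂ) by push_cast; rfl, norm_sq_ofReal_mul_exp_add,
    show -(t * p) - t * (1 - p) = -t by ring, cos_neg]
  ring

theorem charfun_gaussian_type_bound (p : ℝ) (hp : p ∈ Set.Ioo (0 : ℝ) 1)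
    (f : ℝ → ℂ)
    (hf : ∀ t : ℝ, f t =
      (1 - p : ℂ) * Complex.exp (-Complex.I * t * p) +
        (p : ℂ) * Complex.exp (Complex.I * t * (1 - p)))
    (t : ℝ) (ht : |t| ≤ Real.pi / 2) :
    ‖f t‖ ≤ Real.exp (-4 * t ^ 2 * p * (1 - p) / Real.pi ^ 2) := by
  have hpq : 0 ≤ 2 * p * (1 - p) :=
    mul_nonneg (mul_nonneg zero_le_two hp.1.le) (sub_nonneg.2 hp.2.le)
  have hcos : 4 / π ^ 2 * t ^ 2 ≤ 1 - cos t := by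
    have h := cos_le_one_sub_mul_sq_of_abs_le ht (half_le_self pi_pos.le)
    rw [cos_pi_div_two, div_pow] at h
    norm_num at h
    linarith
  rw [← pow_le_pow_iff_left₀ (norm_nonneg _) (exp_pos _).le two_ne_zero, hf,
    norm_sq_bernoulli_charfun, ← exp_nat_mul]
  calc 1 - 2 * p * (1 - p) * (1 - cos t)
      ≤ -(2 * p * (1 - p) * (4 / π ^ 2 * t ^ 2)) + 1 := by
        linarith [mul_le_mul_of_nonneg_left hcos hpq]
    _ ≤ exp (-(2 * p * (1 - p) * (4 / π ^ 2 * t ^ 2))) := add_one_le_exp _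
    _ = exp ((2 : ℕ) * (-4 * t ^ 2 * p * (1 - p) / π ^ 2)) := by push_cast; ring_nf
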